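/- Let G, H be finite groups, X ≤ G×H a subgroup, M a left 𝕜X-module, N a left 𝕜X°-module, and P a left 𝕜[X*X°]-module. Then there are isomorphisms of 𝕜-modules, natural in M, N and P: (a) Hom_{𝕜[X*X°]}(M ⊗^{X,X°}_{𝕜H} N, P) ≅ Hom_{𝕜X°}(N, LHom^{X,X*X°}_{𝕜G}(M,P)), and (b) Hom_{𝕜[X*X°]}(M ⊗^{X,X°}_{𝕜H} N, P) ≅ Hom_{𝕜X}(M, RHom^{X°,X*X°}_{𝕜G}(N,P)); in (a) the map sends f to (n ↦ (m ↦ f(m⊗n))). (Here X°*(X*X°) = X° and (X*X°)*X = X, so the LHom and RHom carry 𝕜X°- resp. 𝕜X-module structures.) -/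

import Mathlib

namespace Stmt8

/-- `k₁(X) = {g ∈ G ∣ (g,1) ∈ X}`. -/
def k1 {G H : Type*} [Group G] [Group H] (X : Subgroup (G × H)) : Subgroup G :=
  X.comap (MonoidHom.inl G H)

/-- `k₂(X) = {h ∈ H ∣ (1,h) ∈ X}`. -/
def k2 {G H : Type*} [Group G] [Group H] (X : Subgroup (G × H)) : Subgroup H :=
  X.comap (MonoidHom.inr G H)

/-- `p₁(X)`, the image of `X` under the first projection. -/
def p1 {G H : Type*} [Group G] [Group H] (X : Subgroup (G × H)) : Subgroup G :=
  X.map (MonoidHom.fst G H)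

/-- `p₂(X)`, the image of `X` under the second projection. -/
def p2 {G H : Type*} [Group G] [Group H] (X : Subgroup (G × H)) : Subgroup H :=
  X.map (MonoidHom.snd G H)

/-- The opposite subgroup `X° = {(h,g) ∣ (g,h) ∈ X}`. -/
def opp {G H : Type*} [Group G] [Group H] (X : Subgroup (G × H)) : Subgroup (H × G) :=
  X.map ((MulEquiv.prodComm : (G × H) ≃* (H × G)).toMonoidHom)

/-- The composition `X*Y` of subgroup correspondences. -/
def comp {G H K : Type*} [Group G] [Group H] [Group K]
    (X : Subgroup (G × H)) (Y : Subgroup (H × K)) : Subgroup (G × K) where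
  carrier := {gk | ∃ h : H, (gk.1, h) ∈ X ∧ (h, gk.2) ∈ Y}
  one_mem' := ⟨1, X.one_mem, Y.one_mem⟩
  mul_mem' := by
    rintro ⟨g, k⟩ ⟨g', k'⟩ ⟨h, hX, hY⟩ ⟨h', hX', hY'⟩
    exact ⟨h * h', X.mul_mem hX hX', Y.mul_mem hY hY'⟩
  inv_mem' := by
    rintro ⟨g, k⟩ ⟨h, hX, hY⟩
    exact ⟨h⁻¹, X.inv_mem hX, Y.inv_mem hY⟩

lemma mem_comp {G H K : Type*} [Group G] [Group H] [Group K]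
    {X : Subgroup (G × H)} {Y : Subgroup (H × K)} {x : G × K} :
    x ∈ comp X Y ↔ ∃ h : H, (x.1, h) ∈ X ∧ (h, x.2) ∈ Y := Iff.rfl

lemma mem_opp {G H : Type*} [Group G] [Group H] {X : Subgroup (G × H)} {x : H × G} :
    x ∈ opp X ↔ (x.2, x.1) ∈ X := by
  rw [opp, Subgroup.mem_map]
  constructor
  · rintro ⟨⟨g, h⟩, hgh, rfl⟩
    simpa using hgh
  · intro hx
    exact ⟨(x.2, x.1), hx, rfl⟩

/-- The diagonal subgroup `Δ(P) = {(g,g) ∣ g ∈ P} ≤ G × G`. -/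
def diag {G : Type*} [Group G] (P : Subgroup G) : Subgroup (G × G) :=
  (P.subtype.prod P.subtype).range

/-- The twisted diagonal subgroup `Δ(P,φ,Q) = {(φ y, y) ∣ y ∈ Q} ≤ G × H`. -/
def tdiag {G H : Type*} [Group G] [Group H] (P : Subgroup G) (Q : Subgroup H)
    (φ : Q ≃* P) : Subgroup (G × H) :=
  ((P.subtype.comp φ.toMonoidHom).prod Q.subtype).range

open scoped TensorProduct

section ExtendedTensor

variable {𝕜 : Type*} [CommRing 𝕜]

/-- The submodule of relations defining the balanced tensor product
`M ⊗_{𝕜[k₂(X)∩k₁(Y)]} N` over the middle group: it is spanned by the elements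
`(m·b) ⊗ n - m ⊗ (b·n)` with `b ∈ k₂(X)∩k₁(Y)`, where `m·b = (1,b⁻¹)·m` and
`b·n = (b,1)·n`. -/
def midRel {A B C : Type*} [Group A] [Group B] [Group C]
    {M N : Type*} [AddCommGroup M] [Module 𝕜 M] [AddCommGroup N] [Module 𝕜 N]
    (X : Subgroup (A × B)) (Y : Subgroup (B × C))
    (ρ : Representation 𝕜 ↥X M) (σ : Representation 𝕜 ↥Y N) :
    Submodule 𝕜 (M ⊗[𝕜] N) :=
  Submodule.span 𝕜 {z | ∃ (b : B) (h1 : (((1 : A), b⁻¹) : A × B) ∈ X)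
    (h2 : ((b, (1 : C)) : B × C) ∈ Y) (m : M) (n : N),
      z = (ρ ⟨((1 : A), b⁻¹), h1⟩ m) ⊗ₜ[𝕜] n - m ⊗ₜ[𝕜] (σ ⟨(b, (1 : C)), h2⟩ n)}

/-- The underlying `𝕜`-module of the extended tensor product `M ⊗^{X,Y}_{𝕜B} N`. -/
abbrev ExtTen {A B C : Type*} [Group A] [Group B] [Group C]
    {M N : Type*} [AddCommGroup M] [Module 𝕜 M] [AddCommGroup N] [Module 𝕜 N]
    (X : Subgroup (A × B)) (Y : Subgroup (B × C))
    (ρ : Representation 𝕜 ↥X M) (σ : Representation 𝕜 ↥Y N) :=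
  (M ⊗[𝕜] N) ⧸ midRel X Y ρ σ

/-- The canonical projection onto the extended tensor product. -/
def extMk {A B C : Type*} [Group A] [Group B] [Group C]
    {M N : Type*} [AddCommGroup M] [Module 𝕜 M] [AddCommGroup N] [Module 𝕜 N]
    (X : Subgroup (A × B)) (Y : Subgroup (B × C))
    (ρ : Representation 𝕜 ↥X M) (σ : Representation 𝕜 ↥Y N) :
    (M ⊗[𝕜] N) →ₗ[𝕜] ExtTen X Y ρ σ :=
  (midRel X Y ρ σ).mkQ

/-- The `𝕜`-module `LHom^{X,Y}_{𝕜A}(M,N) = Hom_{𝕜[k₁(X)∩k₁(Y)]}(M,N)` of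
`𝕜`-linear maps commuting with the actions of `k₁(X)∩k₁(Y)` (via `(a,1)`). -/
def lHomSub {A B C : Type*} [Group A] [Group B] [Group C]
    {M N : Type*} [AddCommGroup M] [Module 𝕜 M] [AddCommGroup N] [Module 𝕜 N]
    (X : Subgroup (A × B)) (Y : Subgroup (A × C))
    (ρ : Representation 𝕜 ↥X M) (σ : Representation 𝕜 ↥Y N) :
    Submodule 𝕜 (M →ₗ[𝕜] N) where
  carrier := {f | ∀ (a : A) (h1 : ((a, (1 : B)) : A × B) ∈ X)
      (h2 : ((a, (1 : C)) : A × C) ∈ Y) (m : M),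
        f (ρ ⟨(a, 1), h1⟩ m) = σ ⟨(a, 1), h2⟩ (f m)}
  add_mem' := by
    intro f g hf hg a h1 h2 m
    simp only [LinearMap.add_apply, hf a h1 h2 m, hg a h1 h2 m, map_add]
  zero_mem' := by
    intro a h1 h2 m
    simp
  smul_mem' := by
    intro c f hf a h1 h2 m
    simp only [LinearMap.smul_apply, hf a h1 h2 m, map_smul]

/-- The `𝕜`-module `RHom^{X,Y}_{𝕜A}(M,N) = Hom_{𝕜[k₂(X)∩k₂(Y)]}(M,N)` of
`𝕜`-linear maps commuting with the actions of `k₂(X)∩k₂(Y)` (via `(1,a)`). -/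
def rHomSub {A B C : Type*} [Group A] [Group B] [Group C]
    {M N : Type*} [AddCommGroup M] [Module 𝕜 M] [AddCommGroup N] [Module 𝕜 N]
    (X : Subgroup (B × A)) (Y : Subgroup (C × A))
    (ρ : Representation 𝕜 ↥X M) (σ : Representation 𝕜 ↥Y N) :
    Submodule 𝕜 (M →ₗ[𝕜] N) where
  carrier := {f | ∀ (a : A) (h1 : (((1 : B), a) : B × A) ∈ X)
      (h2 : (((1 : C), a) : C × A) ∈ Y) (m : M),
        f (ρ ⟨(1, a), h1⟩ m) = σ ⟨(1, a), h2⟩ (f m)}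
  add_mem' := by
    intro f g hf hg a h1 h2 m
    simp only [LinearMap.add_apply, hf a h1 h2 m, hg a h1 h2 m, map_add]
  zero_mem' := by
    intro a h1 h2 m
    simp
  smul_mem' := by
    intro c f hf a h1 h2 m
    simp only [LinearMap.smul_apply, hf a h1 h2 m, map_smul]

/-- The `𝕜`-module of `𝕜I`-linear maps between two representations of a group
`I`, e.g. `Hom_{𝕜[X*X°]}(-,-)` or `Hom_{𝕜X}(-,-)`. -/
def fullHomSub {I : Type*} [Group I]
    {M N : Type*} [AddCommGroup M] [Module 𝕜 M] [AddCommGroup N] [Module 𝕜 N]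
    (ρ : Representation 𝕜 I M) (σ : Representation 𝕜 I N) :
    Submodule 𝕜 (M →ₗ[𝕜] N) where
  carrier := {f | ∀ (x : I) (m : M), f (ρ x m) = σ x (f m)}
  add_mem' := by
    intro f g hf hg x m
    simp only [LinearMap.add_apply, hf x m, hg x m, map_add]
  zero_mem' := by
    intro x m
    simp
  smul_mem' := by
    intro c f hf x m
    simp only [LinearMap.smul_apply, hf x m, map_smul]

/-- Relations defining the induced module `Ind_{X'}^{X}(M') = 𝕜X ⊗_{𝕜X'} M'`:
spanned by `(b·a) ⊗ m - b ⊗ (a·m)` for `a ∈ X'`, `b ∈ X`. -/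
noncomputable def indRel {I : Type*} [Group I] (X' X : Subgroup I)
    {M' : Type*} [AddCommGroup M'] [Module 𝕜 M']
    (ρ' : Representation 𝕜 ↥X' M') :
    Submodule 𝕜 (MonoidAlgebra 𝕜 ↥X ⊗[𝕜] M') :=
  Submodule.span 𝕜 {z | ∃ (b : ↥X) (a : I) (h1 : a ∈ X') (h2 : a ∈ X) (m : M'),
    z = (MonoidAlgebra.single (b * ⟨a, h2⟩) (1 : 𝕜)) ⊗ₜ[𝕜] m -
        (MonoidAlgebra.single b (1 : 𝕜)) ⊗ₜ[𝕜] (ρ' ⟨a, h1⟩ m)}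

/-- The underlying `𝕜`-module of the induced module `Ind_{X'}^{X}(M')`. -/
abbrev Ind {I : Type*} [Group I] (X' X : Subgroup I)
    {M' : Type*} [AddCommGroup M'] [Module 𝕜 M']
    (ρ' : Representation 𝕜 ↥X' M') :=
  (MonoidAlgebra 𝕜 ↥X ⊗[𝕜] M') ⧸ indRel X' X ρ'

/-- The canonical projection onto the induced module. -/
noncomputable def indMk {I : Type*} [Group I] (X' X : Subgroup I)
    {M' : Type*} [AddCommGroup M'] [Module 𝕜 M']
    (ρ' : Representation 𝕜 ↥X' M') :
    (MonoidAlgebra 𝕜 ↥X ⊗[𝕜] M') →ₗ[𝕜] Ind X' X ρ' :=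
  (indRel X' X ρ').mkQ

end ExtendedTensor

section Homs

variable {G H : Type*} [Group G] [Group H]

lemma k1_prod_mem {X : Subgroup (G × H)} (u : ↥(k1 X)) :
    (((u : G), (1 : H)) : G × H) ∈ X := u.2

lemma k1_inv_prod_mem {X : Subgroup (G × H)} (u : ↥(k1 X)) :
    (((u : G)⁻¹, (1 : H)) : G × H) ∈ X := by
  simpa using X.inv_mem (k1_prod_mem u)

lemma k2_prod_mem {X : Subgroup (G × H)} (u : ↥(k2 X)) :
    (((1 : G), (u : H)) : G × H) ∈ X := u.2

/-- The embedding `k₁(X) →* X`, `u ↦ (u,1)`. -/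
def k1Hom (X : Subgroup (G × H)) : ↥(k1 X) →* ↥X where
  toFun u := ⟨((u : G), (1 : H)), u.2⟩
  map_one' := rfl
  map_mul' u v := Subtype.ext (by simp)

/-- The embedding `k₁(X) →* X°`, `u ↦ (1,u)`, giving the right `𝕜[k₁(X)]`-module
structure (read as a left module) on left `𝕜X°`-modules. -/
def k1HomOp (X : Subgroup (G × H)) : ↥(k1 X) →* ↥(opp X) where
  toFun u := ⟨((1 : H), (u : G)), mem_opp.mpr u.2⟩
  map_one' := rfl
  map_mul' u v := Subtype.ext (by simp)

/-- The embedding `k₂(X) →* X`, `u ↦ (1,u)`. -/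
def k2Hom (X : Subgroup (G × H)) : ↥(k2 X) →* ↥X where
  toFun u := ⟨((1 : G), (u : H)), u.2⟩
  map_one' := rfl
  map_mul' u v := Subtype.ext (by simp)

end Homs

/-!
Both isomorphisms are currying `f ↦ ((m, n) ↦ f (m ⊗ n))`. A `𝕜`-linear map out of the balanced
tensor product is the same as a balanced bilinear map, and for such a map equivariance under
`X*X°` splits into equivariance in each variable separately: `(g, g') ∈ X*X°` acts through some
`(g, h) ∈ X` on `M` and `(h, g') ∈ X°` on `N`. Conversely, to see that the curried map is
`X°`-equivariant (resp. `X`-equivariant) one lifts `(h, g) ∈ X°` to `(g, g) ∈ X*X°`, which is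
possible because `p₁(X°) = p₂(X)`.
-/

section Projections

variable {G H : Type*} [Group G] [Group H] {X : Subgroup (G × H)}

lemma mem_p1 {g : G} : g ∈ p1 X ↔ ∃ h, (g, h) ∈ X := by
  simp [p1]

lemma mem_p2 {h : H} : h ∈ p2 X ↔ ∃ g, (g, h) ∈ X := by
  simp [p2]

lemma p1_opp : p1 (opp X) = p2 X := by
  ext h
  simp [mem_p1, mem_p2, mem_opp]

end Projections

section Actions

variable {𝕜 : Type*} [CommRing 𝕜] {A B C : Type*} [Group A] [Group B] [Group C]
  {M N : Type*} [AddCommGroup M] [Module 𝕜 M] [AddCommGroup N] [Module 𝕜 N]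

lemma rep_apply_one_one {S : Subgroup (A × B)} (ρ : Representation 𝕜 ↥S M)
    (h : ((1 : A), (1 : B)) ∈ S) (m : M) : ρ ⟨(1, 1), h⟩ m = m := by
  rw [show (⟨(1, 1), h⟩ : S) = 1 from rfl, map_one, Module.End.one_apply]

def IsLHomAction {X : Subgroup (A × B)} {Y : Subgroup (A × C)} {Z : Subgroup (B × C)}
    {ρ : Representation 𝕜 ↥X M} {σ : Representation 𝕜 ↥Y N}
    (ρE : Representation 𝕜 ↥Z ↥(lHomSub X Y ρ σ)) : Prop :=
  ∀ (b : B) (c : C) (hbc : (b, c) ∈ Z) (a : A) (h1 : (a, b) ∈ X) (h2 : (a, c) ∈ Y)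
    (f : ↥(lHomSub X Y ρ σ)) (m : M),
    (ρE ⟨(b, c), hbc⟩ f : M →ₗ[𝕜] N) m = σ ⟨(a, c), h2⟩ ((f : M →ₗ[𝕜] N) (ρ ⟨(a, b), h1⟩⁻¹ m))

def IsRHomAction {X : Subgroup (B × A)} {Y : Subgroup (C × A)} {Z : Subgroup (C × B)}
    {ρ : Representation 𝕜 ↥X M} {σ : Representation 𝕜 ↥Y N}
    (ρF : Representation 𝕜 ↥Z ↥(rHomSub X Y ρ σ)) : Prop :=
  ∀ (c : C) (b : B) (hcb : (c, b) ∈ Z) (a : A) (h1 : (c, a) ∈ Y) (h2 : (b, a) ∈ X)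
    (f : ↥(rHomSub X Y ρ σ)) (m : M),
    (ρF ⟨(c, b), hcb⟩ f : M →ₗ[𝕜] N) m = σ ⟨(c, a), h1⟩ ((f : M →ₗ[𝕜] N) (ρ ⟨(b, a), h2⟩⁻¹ m))

end Actions

section ExtendedTensorAdjunction

variable {𝕜 : Type*} [CommRing 𝕜] {A B C : Type*} [Group A] [Group B] [Group C]
  {M N P : Type*} [AddCommGroup M] [Module 𝕜 M] [AddCommGroup N] [Module 𝕜 N]
  [AddCommGroup P] [Module 𝕜 P] {X : Subgroup (A × B)} {Y : Subgroup (B × C)}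
  {ρM : Representation 𝕜 ↥X M} {ρN : Representation 𝕜 ↥Y N}
  {ρP : Representation 𝕜 ↥(comp X Y) P}
  {ρT : Representation 𝕜 ↥(comp X Y) (ExtTen X Y ρM ρN)}
  {ρE : Representation 𝕜 ↥Y ↥(lHomSub X (comp X Y) ρM ρP)}
  {ρF : Representation 𝕜 ↥X ↥(rHomSub Y (comp X Y) ρN ρP)}

variable (ρM ρN) in
def IsBalanced (φ : M →ₗ[𝕜] N →ₗ[𝕜] P) : Prop :=
  ∀ (b : B) (h1 : ((1 : A), b⁻¹) ∈ X) (h2 : (b, (1 : C)) ∈ Y) (m : M) (n : N),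
    φ (ρM ⟨(1, b⁻¹), h1⟩ m) n = φ m (ρN ⟨(b, 1), h2⟩ n)

lemma midRel_le_ker_lift {φ : M →ₗ[𝕜] N →ₗ[𝕜] P} (hφ : IsBalanced ρM ρN φ) :
    midRel X Y ρM ρN ≤ LinearMap.ker (TensorProduct.lift φ) := by
  rw [midRel, Submodule.span_le]
  rintro _ ⟨b, h1, h2, m, n, rfl⟩
  simp [hφ b h1 h2 m n]

def extLift (φ : M →ₗ[𝕜] N →ₗ[𝕜] P) (hφ : IsBalanced ρM ρN φ) : ExtTen X Y ρM ρN →ₗ[𝕜] P :=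
  (midRel X Y ρM ρN).liftQ (TensorProduct.lift φ) (midRel_le_ker_lift hφ)

@[simp]
lemma extLift_extMk_tmul (φ : M →ₗ[𝕜] N →ₗ[𝕜] P) (hφ : IsBalanced ρM ρN φ) (m : M) (n : N) :
    extLift φ hφ (extMk X Y ρM ρN (m ⊗ₜ n)) = φ m n :=
  rfl

lemma extTen_hom_ext {f g : ExtTen X Y ρM ρN →ₗ[𝕜] P}
    (h : ∀ (m : M) (n : N), f (extMk X Y ρM ρN (m ⊗ₜ n)) = g (extMk X Y ρM ρN (m ⊗ₜ n))) :
    f = g :=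
  Submodule.linearMap_qext _ (TensorProduct.ext' h)

def extCurry (f : ExtTen X Y ρM ρN →ₗ[𝕜] P) : M →ₗ[𝕜] N →ₗ[𝕜] P :=
  (TensorProduct.mk 𝕜 M N).compr₂ (f ∘ₗ extMk X Y ρM ρN)

@[simp]
lemma extCurry_apply (f : ExtTen X Y ρM ρN →ₗ[𝕜] P) (m : M) (n : N) :
    extCurry f m n = f (extMk X Y ρM ρN (m ⊗ₜ n)) :=
  rfl

variable (ρT) in
def IsExtTenAction : Prop :=
  ∀ (g : A) (g' : C) (hgg : (g, g') ∈ comp X Y) (h : B) (h1 : (g, h) ∈ X) (h2 : (h, g') ∈ Y)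
    (m : M) (n : N), ρT ⟨(g, g'), hgg⟩ (extMk X Y ρM ρN (m ⊗ₜ n)) =
      extMk X Y ρM ρN ((ρM ⟨(g, h), h1⟩ m) ⊗ₜ (ρN ⟨(h, g'), h2⟩ n))

lemma IsExtTenAction.apply_left (hT : IsExtTenAction ρT) {a : A} (h1 : (a, (1 : B)) ∈ X)
    (h2 : (a, (1 : C)) ∈ comp X Y) (m : M) (n : N) :
    ρT ⟨(a, 1), h2⟩ (extMk X Y ρM ρN (m ⊗ₜ n)) = extMk X Y ρM ρN ((ρM ⟨(a, 1), h1⟩ m) ⊗ₜ n) := by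
  rw [hT a 1 h2 1 h1 Y.one_mem, rep_apply_one_one]

lemma IsExtTenAction.apply_right (hT : IsExtTenAction ρT) {c : C} (h1 : ((1 : B), c) ∈ Y)
    (h2 : ((1 : A), c) ∈ comp X Y) (m : M) (n : N) :
    ρT ⟨(1, c), h2⟩ (extMk X Y ρM ρN (m ⊗ₜ n)) = extMk X Y ρM ρN (m ⊗ₜ (ρN ⟨(1, c), h1⟩ n)) := by
  rw [hT 1 c h2 1 X.one_mem h1, rep_apply_one_one]

lemma flip_extCurry_mem_lHomSub (hT : IsExtTenAction ρT) {f : ExtTen X Y ρM ρN →ₗ[𝕜] P}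
    (hf : f ∈ fullHomSub ρT ρP) (n : N) : (extCurry f).flip n ∈ lHomSub X (comp X Y) ρM ρP := by
  intro a h1 h2 m
  rw [LinearMap.flip_apply, LinearMap.flip_apply, extCurry_apply, extCurry_apply,
    ← hT.apply_left h1 h2, hf]

def lCurry (hT : IsExtTenAction ρT) (f : ↥(fullHomSub ρT ρP)) :
    N →ₗ[𝕜] ↥(lHomSub X (comp X Y) ρM ρP) :=
  LinearMap.codRestrict _ (extCurry f.1).flip (flip_extCurry_mem_lHomSub hT f.2)

lemma lCurry_mem_fullHomSub (hT : IsExtTenAction ρT) (hE : IsLHomAction ρE) (hY : p1 Y ≤ p2 X)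
    (f : ↥(fullHomSub ρT ρP)) : lCurry hT f ∈ fullHomSub ρN ρE := by
  rintro ⟨⟨b, c⟩, hbc⟩ n
  obtain ⟨a, hab⟩ := mem_p2.mp (hY (mem_p1.mpr ⟨c, hbc⟩))
  have hac : (a, c) ∈ comp X Y := ⟨b, hab, hbc⟩
  ext m
  rw [hE b c hbc a hab hac]
  change f.1 (extMk X Y ρM ρN (m ⊗ₜ ρN ⟨(b, c), hbc⟩ n)) =
    ρP ⟨(a, c), hac⟩ (f.1 (extMk X Y ρM ρN (ρM ⟨(a, b), hab⟩⁻¹ m ⊗ₜ n)))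
  rw [← f.2, hT a c hac b hab hbc, Representation.self_inv_apply]

lemma flip_lHom_isBalanced (hE : IsLHomAction ρE) (g : ↥(fullHomSub ρN ρE)) :
    IsBalanced ρM ρN ((lHomSub X (comp X Y) ρM ρP).subtype ∘ₗ g.1).flip := by
  intro b h1 h2 m n
  have h1' : ((1 : A), b) ∈ X := by simpa using X.inv_mem h1
  have hinv : (⟨(1, b), h1'⟩ : ↥X)⁻¹ = ⟨(1, b⁻¹), h1⟩ :=
    Subtype.ext (by simp)
  simp only [LinearMap.flip_apply, LinearMap.comp_apply, Submodule.subtype_apply]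
  rw [g.2 ⟨(b, 1), h2⟩ n, hE b 1 h2 1 h1' (comp X Y).one_mem, rep_apply_one_one, hinv]

def lUncurry (hE : IsLHomAction ρE) (g : ↥(fullHomSub ρN ρE)) : ExtTen X Y ρM ρN →ₗ[𝕜] P :=
  extLift _ (flip_lHom_isBalanced hE g)

lemma lUncurry_mem_fullHomSub (hT : IsExtTenAction ρT) (hE : IsLHomAction ρE)
    (g : ↥(fullHomSub ρN ρE)) : lUncurry hE g ∈ fullHomSub ρT ρP := by
  rintro ⟨⟨a, c⟩, hac⟩ z
  obtain ⟨b, hab, hbc⟩ := id hac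
  suffices lUncurry hE g ∘ₗ ρT ⟨(a, c), hac⟩ = ρP ⟨(a, c), hac⟩ ∘ₗ lUncurry hE g from
    LinearMap.congr_fun this z
  refine extTen_hom_ext fun m n => ?_
  simp only [LinearMap.comp_apply, hT a c hac b hab hbc, lUncurry, extLift_extMk_tmul,
    LinearMap.flip_apply, Submodule.subtype_apply]
  rw [g.2, hE b c hbc a hab hac, Representation.inv_self_apply]

def homExtTenEquivLHom (hT : IsExtTenAction ρT) (hE : IsLHomAction ρE) (hY : p1 Y ≤ p2 X) :
    ↥(fullHomSub ρT ρP) ≃ₗ[𝕜] ↥(fullHomSub ρN ρE) where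
  toFun f := ⟨lCurry hT f, lCurry_mem_fullHomSub hT hE hY f⟩
  map_add' _ _ := rfl
  map_smul' _ _ := rfl
  invFun g := ⟨lUncurry hE g, lUncurry_mem_fullHomSub hT hE g⟩
  left_inv _ := Subtype.ext (extTen_hom_ext fun _ _ => rfl)
  right_inv _ := rfl

lemma extCurry_mem_rHomSub (hT : IsExtTenAction ρT) {f : ExtTen X Y ρM ρN →ₗ[𝕜] P}
    (hf : f ∈ fullHomSub ρT ρP) (m : M) : extCurry f m ∈ rHomSub Y (comp X Y) ρN ρP := by
  intro c h1 h2 n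
  rw [extCurry_apply, extCurry_apply, ← hT.apply_right h1 h2, hf]

def rCurry (hT : IsExtTenAction ρT) (f : ↥(fullHomSub ρT ρP)) :
    M →ₗ[𝕜] ↥(rHomSub Y (comp X Y) ρN ρP) :=
  LinearMap.codRestrict _ (extCurry f.1) (extCurry_mem_rHomSub hT f.2)

lemma rCurry_mem_fullHomSub (hT : IsExtTenAction ρT) (hF : IsRHomAction ρF) (hX : p2 X ≤ p1 Y)
    (f : ↥(fullHomSub ρT ρP)) : rCurry hT f ∈ fullHomSub ρM ρF := by
  rintro ⟨⟨a, b⟩, hab⟩ m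
  obtain ⟨c, hbc⟩ := mem_p1.mp (hX (mem_p2.mpr ⟨a, hab⟩))
  have hac : (a, c) ∈ comp X Y := ⟨b, hab, hbc⟩
  ext n
  rw [hF a b hab c hac hbc]
  change f.1 (extMk X Y ρM ρN (ρM ⟨(a, b), hab⟩ m ⊗ₜ n)) =
    ρP ⟨(a, c), hac⟩ (f.1 (extMk X Y ρM ρN (m ⊗ₜ ρN ⟨(b, c), hbc⟩⁻¹ n)))
  rw [← f.2, hT a c hac b hab hbc, Representation.self_inv_apply]

lemma rHom_isBalanced (hF : IsRHomAction ρF) (g : ↥(fullHomSub ρM ρF)) :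
    IsBalanced ρM ρN ((rHomSub Y (comp X Y) ρN ρP).subtype ∘ₗ g.1) := by
  intro b h1 h2 m n
  have h2' : (b⁻¹, (1 : C)) ∈ Y := by simpa using Y.inv_mem h2
  have hinv : (⟨(b⁻¹, 1), h2'⟩ : ↥Y)⁻¹ = ⟨(b, 1), h2⟩ :=
    Subtype.ext (by simp)
  simp only [LinearMap.comp_apply, Submodule.subtype_apply]
  rw [g.2 ⟨(1, b⁻¹), h1⟩ m, hF 1 b⁻¹ h1 1 (comp X Y).one_mem h2', rep_apply_one_one, hinv]

def rUncurry (hF : IsRHomAction ρF) (g : ↥(fullHomSub ρM ρF)) : ExtTen X Y ρM ρN →ₗ[𝕜] P :=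
  extLift _ (rHom_isBalanced hF g)

lemma rUncurry_mem_fullHomSub (hT : IsExtTenAction ρT) (hF : IsRHomAction ρF)
    (g : ↥(fullHomSub ρM ρF)) : rUncurry hF g ∈ fullHomSub ρT ρP := by
  rintro ⟨⟨a, c⟩, hac⟩ z
  obtain ⟨b, hab, hbc⟩ := id hac
  suffices rUncurry hF g ∘ₗ ρT ⟨(a, c), hac⟩ = ρP ⟨(a, c), hac⟩ ∘ₗ rUncurry hF g from
    LinearMap.congr_fun this z
  refine extTen_hom_ext fun m n => ?_
  simp only [LinearMap.comp_apply, hT a c hac b hab hbc, rUncurry, extLift_extMk_tmul,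
    Submodule.subtype_apply]
  rw [g.2, hF a b hab c hac hbc, Representation.inv_self_apply]

def homExtTenEquivRHom (hT : IsExtTenAction ρT) (hF : IsRHomAction ρF) (hX : p2 X ≤ p1 Y) :
    ↥(fullHomSub ρT ρP) ≃ₗ[𝕜] ↥(fullHomSub ρM ρF) where
  toFun f := ⟨rCurry hT f, rCurry_mem_fullHomSub hT hF hX f⟩
  map_add' _ _ := rfl
  map_smul' _ _ := rfl
  invFun g := ⟨rUncurry hF g, rUncurry_mem_fullHomSub hT hF g⟩
  left_inv _ := Subtype.ext (extTen_hom_ext fun _ _ => rfl)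
  right_inv _ := rfl

end ExtendedTensorAdjunction

theorem stmt8_general {𝕜 : Type*} [CommRing 𝕜]
    {G H : Type*} [Group G] [Group H]
    (X : Subgroup (G × H))
    {M N P : Type*} [AddCommGroup M] [Module 𝕜 M] [AddCommGroup N] [Module 𝕜 N]
    [AddCommGroup P] [Module 𝕜 P]
    (ρM : Representation 𝕜 ↥X M) (ρN : Representation 𝕜 ↥(opp X) N)
    (ρP : Representation 𝕜 ↥(comp X (opp X)) P)
    -- the `𝕜[X*X°]`-module structure on `M ⊗^{X,X°}_{𝕜H} N`
    (ρT : Representation 𝕜 ↥(comp X (opp X)) (ExtTen X (opp X) ρM ρN))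
    (hρT : ∀ (g g' : G) (hgg : (g, g') ∈ comp X (opp X)) (h : H)
      (h1 : (g, h) ∈ X) (h2 : (h, g') ∈ opp X) (m : M) (n : N),
      ρT ⟨(g, g'), hgg⟩ (extMk X (opp X) ρM ρN (m ⊗ₜ[𝕜] n)) =
        extMk X (opp X) ρM ρN ((ρM ⟨(g, h), h1⟩ m) ⊗ₜ[𝕜] (ρN ⟨(h, g'), h2⟩ n)))
    -- the `𝕜X°`-module structure on `LHom^{X,X*X°}_{𝕜G}(M,P)`
    (ρE : Representation 𝕜 ↥(opp X) ↥(lHomSub X (comp X (opp X)) ρM ρP))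
    (hρE : ∀ (b : H) (c : G) (hbc : (b, c) ∈ opp X)
      (a : G) (h1 : (a, b) ∈ X) (h2 : (a, c) ∈ comp X (opp X))
      (f : ↥(lHomSub X (comp X (opp X)) ρM ρP)) (m : M),
      ((ρE ⟨(b, c), hbc⟩ f : M →ₗ[𝕜] P)) m =
        ρP ⟨(a, c), h2⟩ ((f : M →ₗ[𝕜] P) (ρM (⟨(a, b), h1⟩)⁻¹ m)))
    -- the `𝕜X`-module structure on `RHom^{X°,X*X°}_{𝕜G}(N,P)`
    (ρF : Representation 𝕜 ↥X ↥(rHomSub (opp X) (comp X (opp X)) ρN ρP))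
    (hρF : ∀ (g : G) (h : H) (hgh : (g, h) ∈ X)
      (a : G) (h1 : (g, a) ∈ comp X (opp X)) (h2 : (h, a) ∈ opp X)
      (f : ↥(rHomSub (opp X) (comp X (opp X)) ρN ρP)) (n : N),
      ((ρF ⟨(g, h), hgh⟩ f : N →ₗ[𝕜] P)) n =
        ρP ⟨(g, a), h1⟩ ((f : N →ₗ[𝕜] P) (ρN (⟨(h, a), h2⟩)⁻¹ n))) :
    (∃ e : ↥(fullHomSub ρT ρP) ≃ₗ[𝕜] ↥(fullHomSub ρN ρE),
      ∀ (f : ↥(fullHomSub ρT ρP)) (n : N) (m : M),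
        (((e f : N →ₗ[𝕜] ↥(lHomSub X (comp X (opp X)) ρM ρP)) n : M →ₗ[𝕜] P)) m =
          (f : ExtTen X (opp X) ρM ρN →ₗ[𝕜] P) (extMk X (opp X) ρM ρN (m ⊗ₜ[𝕜] n))) ∧
    (∃ e : ↥(fullHomSub ρT ρP) ≃ₗ[𝕜] ↥(fullHomSub ρM ρF),
      ∀ (f : ↥(fullHomSub ρT ρP)) (m : M) (n : N),
        (((e f : M →ₗ[𝕜] ↥(rHomSub (opp X) (comp X (opp X)) ρN ρP)) m : N →ₗ[𝕜] P)) n =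
          (f : ExtTen X (opp X) ρM ρN →ₗ[𝕜] P) (extMk X (opp X) ρM ρN (m ⊗ₜ[𝕜] n))) :=
  ⟨⟨homExtTenEquivLHom hρT hρE p1_opp.le, fun _ _ _ => rfl⟩,
    ⟨homExtTenEquivRHom hρT hρF p1_opp.ge, fun _ _ _ => rfl⟩⟩

/-- For `X ≤ G×H`, `M` a `𝕜X`-module, `N` a `𝕜X°`-module and `P` a
`𝕜[X*X°]`-module there are natural `𝕜`-module isomorphisms
(a) `Hom_{𝕜[X*X°]}(M ⊗^{X,X°}_{𝕜H} N, P) ≅ Hom_{𝕜X°}(N, LHom^{X,X*X°}_{𝕜G}(M,P))`,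
`f ↦ (n ↦ (m ↦ f(m⊗n)))`, and
(b) `Hom_{𝕜[X*X°]}(M ⊗^{X,X°}_{𝕜H} N, P) ≅ Hom_{𝕜X}(M, RHom^{X°,X*X°}_{𝕜G}(N,P))`,
`f ↦ (m ↦ (n ↦ f(m⊗n)))`. -/
theorem stmt8 {𝕜 : Type*} [CommRing 𝕜]
    {G H : Type*} [Group G] [Group H] [Finite G] [Finite H]
    (X : Subgroup (G × H))
    {M N P : Type*} [AddCommGroup M] [Module 𝕜 M] [AddCommGroup N] [Module 𝕜 N]
    [AddCommGroup P] [Module 𝕜 P]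
    (ρM : Representation 𝕜 ↥X M) (ρN : Representation 𝕜 ↥(opp X) N)
    (ρP : Representation 𝕜 ↥(comp X (opp X)) P)
    -- the `𝕜[X*X°]`-module structure on `M ⊗^{X,X°}_{𝕜H} N`
    (ρT : Representation 𝕜 ↥(comp X (opp X)) (ExtTen X (opp X) ρM ρN))
    (hρT : ∀ (g g' : G) (hgg : (g, g') ∈ comp X (opp X)) (h : H)
      (h1 : (g, h) ∈ X) (h2 : (h, g') ∈ opp X) (m : M) (n : N),
      ρT ⟨(g, g'), hgg⟩ (extMk X (opp X) ρM ρN (m ⊗ₜ[𝕜] n)) =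
        extMk X (opp X) ρM ρN ((ρM ⟨(g, h), h1⟩ m) ⊗ₜ[𝕜] (ρN ⟨(h, g'), h2⟩ n)))
    -- the `𝕜X°`-module structure on `LHom^{X,X*X°}_{𝕜G}(M,P)`
    (ρE : Representation 𝕜 ↥(opp X) ↥(lHomSub X (comp X (opp X)) ρM ρP))
    (hρE : ∀ (b : H) (c : G) (hbc : (b, c) ∈ opp X)
      (a : G) (h1 : (a, b) ∈ X) (h2 : (a, c) ∈ comp X (opp X))
      (f : ↥(lHomSub X (comp X (opp X)) ρM ρP)) (m : M),
      ((ρE ⟨(b, c), hbc⟩ f : M →ₗ[𝕜] P)) m =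
        ρP ⟨(a, c), h2⟩ ((f : M →ₗ[𝕜] P) (ρM (⟨(a, b), h1⟩)⁻¹ m)))
    -- the `𝕜X`-module structure on `RHom^{X°,X*X°}_{𝕜G}(N,P)`
    (ρF : Representation 𝕜 ↥X ↥(rHomSub (opp X) (comp X (opp X)) ρN ρP))
    (hρF : ∀ (g : G) (h : H) (hgh : (g, h) ∈ X)
      (a : G) (h1 : (g, a) ∈ comp X (opp X)) (h2 : (h, a) ∈ opp X)
      (f : ↥(rHomSub (opp X) (comp X (opp X)) ρN ρP)) (n : N),
      ((ρF ⟨(g, h), hgh⟩ f : N →ₗ[𝕜] P)) n =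
        ρP ⟨(g, a), h1⟩ ((f : N →ₗ[𝕜] P) (ρN (⟨(h, a), h2⟩)⁻¹ n))) :
    (∃ e : ↥(fullHomSub ρT ρP) ≃ₗ[𝕜] ↥(fullHomSub ρN ρE),
      ∀ (f : ↥(fullHomSub ρT ρP)) (n : N) (m : M),
        (((e f : N →ₗ[𝕜] ↥(lHomSub X (comp X (opp X)) ρM ρP)) n : M →ₗ[𝕜] P)) m =
          (f : ExtTen X (opp X) ρM ρN →ₗ[𝕜] P) (extMk X (opp X) ρM ρN (m ⊗ₜ[𝕜] n))) ∧
    (∃ e : ↥(fullHomSub ρT ρP) ≃ₗ[𝕜] ↥(fullHomSub ρM ρF),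
      ∀ (f : ↥(fullHomSub ρT ρP)) (m : M) (n : N),
        (((e f : M →ₗ[𝕜] ↥(rHomSub (opp X) (comp X (opp X)) ρN ρP)) m : N →ₗ[𝕜] P)) n =
          (f : ExtTen X (opp X) ρM ρN →ₗ[𝕜] P) (extMk X (opp X) ρM ρN (m ⊗ₜ[𝕜] n))) :=
  stmt8_general X ρM ρN ρP ρT hρT ρE hρE ρF hρF

end Stmt8
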